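/- If every injective right R-module has finite flat dimension, then every complete projective resolution of left R-modules is a complete flat resolution; i.e., for every exact sequence P of projective left R-modules with Hom_R(P, Q) exact for all projective Q, the complex I ⊗_R P is exact for every injective right R-module I. -/

import Mathlib

open CategoryTheory

universe u

variable (R : Type u) [CommRing R]

/-- A (doubly infinite) complex of `R`-modules, as a `ℤ`-indexed family of modules
with differentials of degree `+1`. -/
structure ModuleComplex where
  X : ℤ → Type u
  [acg : ∀ n, AddCommGroup (X n)]
  [mod : ∀ n, Module R (X n)]
  d : ∀ n : ℤ, X n →ₗ[R] X (n + 1)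
  comp_eq_zero : ∀ n : ℤ, (d (n + 1)).comp (d n) = 0

attribute [instance] ModuleComplex.acg ModuleComplex.mod

namespace ModuleComplex

variable {R}

/-- The complex is exact. -/
def Exact (C : ModuleComplex R) : Prop :=
  ∀ n : ℤ, LinearMap.range (C.d n) = LinearMap.ker (C.d (n + 1))

/-- The complex `I ⊗_R C` is exact. -/
def TensorExact (C : ModuleComplex R) (I : Type u) [AddCommGroup I] [Module R I] : Prop :=
  ∀ n : ℤ, LinearMap.range (LinearMap.lTensor I (C.d n))
    = LinearMap.ker (LinearMap.lTensor I (C.d (n + 1)))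

/-- The complex `Hom_R(C, Q)` is exact. -/
def HomExact (C : ModuleComplex R) (Q : Type u) [AddCommGroup Q] [Module R Q] : Prop :=
  ∀ (n : ℤ) (f : C.X (n + 1) →ₗ[R] Q), f.comp (C.d n) = 0 →
    ∃ g : C.X (n + 1 + 1) →ₗ[R] Q, g.comp (C.d (n + 1)) = f

end ModuleComplex

/-- A complete flat resolution: an exact complex of flat modules that remains exact
after tensoring with any injective module. -/
def IsCompleteFlatResolution (C : ModuleComplex R) : Prop :=
  (∀ n, Module.Flat R (C.X n)) ∧ C.Exact ∧
    ∀ (I : Type u) [AddCommGroup I] [Module R I], Module.Injective R I → C.TensorExact I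

/-- A complete projective resolution: an exact complex of projective modules such that
`Hom_R(-, Q)` leaves it exact for every projective module `Q`. -/
def IsCompleteProjectiveResolution (C : ModuleComplex R) : Prop :=
  (∀ n, Module.Projective R (C.X n)) ∧ C.Exact ∧
    ∀ (Q : Type u) [AddCommGroup Q] [Module R Q], Module.Projective R Q → C.HomExact Q

/-- A Gorenstein flat module: a cokernel of a middle map of a complete flat resolution. -/
def IsGorensteinFlat (M : Type u) [AddCommGroup M] [Module R M] : Prop :=
  ∃ C : ModuleComplex R, IsCompleteFlatResolution R C ∧
    Nonempty (M ≃ₗ[R] LinearMap.range (C.d 0))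

/-- A Gorenstein projective module. -/
def IsGorensteinProjective (M : Type u) [AddCommGroup M] [Module R M] : Prop :=
  ∃ C : ModuleComplex R, IsCompleteProjectiveResolution R C ∧
    Nonempty (M ≃ₗ[R] LinearMap.range (C.d 0))

/-- `ResDimLE P n M` : `M` admits a length-`n` left resolution by modules satisfying `P`. -/
def ResDimLE (P : ∀ (N : Type u) [AddCommGroup N] [Module R N], Prop) :
    ℕ → ∀ (M : Type u) [AddCommGroup M] [Module R M], Prop :=
  Nat.rec (motive := fun _ => ∀ (M : Type u) [AddCommGroup M] [Module R M], Prop)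
    (fun M _ _ => P M)
    (fun _ ih M _ _ => ∃ (G : Type u) (_ : AddCommGroup G) (_ : Module R G)
      (f : G →ₗ[R] M), P G ∧ Function.Surjective f ∧ ih (LinearMap.ker f))

/-- `CoresDimLE P n M` : `M` admits a length-`n` right resolution by modules satisfying `P`. -/
def CoresDimLE (P : ∀ (N : Type u) [AddCommGroup N] [Module R N], Prop) :
    ℕ → ∀ (M : Type u) [AddCommGroup M] [Module R M], Prop :=
  Nat.rec (motive := fun _ => ∀ (M : Type u) [AddCommGroup M] [Module R M], Prop)
    (fun M _ _ => P M)
    (fun _ ih M _ _ => ∃ (I : Type u) (_ : AddCommGroup I) (_ : Module R I)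
      (f : M →ₗ[R] I), P I ∧ Function.Injective f ∧ ih (I ⧸ LinearMap.range f))

/-- Flat dimension. -/
noncomputable def flatDim (M : Type u) [AddCommGroup M] [Module R M] : ℕ∞ :=
  sInf {n : ℕ∞ | ∃ m : ℕ, n = m ∧ ResDimLE R (fun N _ _ => Module.Flat R N) m M}

/-- Injective dimension. -/
noncomputable def injDim (M : Type u) [AddCommGroup M] [Module R M] : ℕ∞ :=
  sInf {n : ℕ∞ | ∃ m : ℕ, n = m ∧ CoresDimLE R (fun N _ _ => Module.Injective R N) m M}

/-- Gorenstein flat dimension. -/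
noncomputable def gorensteinFlatDim (M : Type u) [AddCommGroup M] [Module R M] : ℕ∞ :=
  sInf {n : ℕ∞ | ∃ m : ℕ, n = m ∧ ResDimLE R (fun N _ _ => IsGorensteinFlat R N) m M}

/-- Gorenstein projective dimension. -/
noncomputable def gorensteinProjDim (M : Type u) [AddCommGroup M] [Module R M] : ℕ∞ :=
  sInf {n : ℕ∞ | ∃ m : ℕ, n = m ∧ ResDimLE R (fun N _ _ => IsGorensteinProjective R N) m M}

/-- `Tor_n^R(N, M)` as a module. -/
noncomputable def TorMod (n : ℕ) (N M : Type u) [AddCommGroup N] [Module R N]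
    [AddCommGroup M] [Module R M] : ModuleCat.{u} R :=
  ((Tor (ModuleCat.{u} R) n).obj (ModuleCat.of R N)).obj (ModuleCat.of R M)

/-- The copure flat dimension: the largest `n` with `Tor_n(E, M) ≠ 0`
for some injective module `E`. -/
noncomputable def copureFlatDim (M : Type u) [AddCommGroup M] [Module R M] : ℕ∞ :=
  sSup {n : ℕ∞ | ∃ m : ℕ, n = m ∧ ∃ (E : Type u) (_ : AddCommGroup E) (_ : Module R E),
    Module.Injective R E ∧ Nontrivial (TorMod R m E M)}

/-- `Ext^n_R(M, N)` as a module. -/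
noncomputable def ExtMod (n : ℕ) (M N : Type u) [AddCommGroup M] [Module R M]
    [AddCommGroup N] [Module R N] : ModuleCat.{u} R :=
  ((Ext R (ModuleCat.{u} R) n).obj (Opposite.op (ModuleCat.of R M))).obj (ModuleCat.of R N)

/-- `M` is infinitely presented: it admits a resolution by finitely generated
free modules. -/
def InfinitelyPresented (M : Type u) [AddCommGroup M] [Module R M] : Prop :=
  ∃ (F : ℕ → ModuleCat.{u} R) (d : ∀ n, F (n + 1) →ₗ[R] F n) (ε : (F 0 : Type u) →ₗ[R] M),
    (∀ n, Module.Free R (F n) ∧ Module.Finite R (F n)) ∧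
    Function.Surjective ε ∧ LinearMap.ker ε = LinearMap.range (d 0) ∧
    ∀ n, LinearMap.ker (d n) = LinearMap.range (d (n + 1))


/-!
Projective modules are flat, so a complete projective resolution `C` is in particular an exact
complex of flat modules, and `- ⊗ C` stays exact at a flat module. Finite flat dimension then
suffices by dimension shifting: for `0 → K → G → I → 0` with `G` flat, the rows
`0 → K ⊗ Cₙ → G ⊗ Cₙ → I ⊗ Cₙ → 0` are exact because each `Cₙ` is flat, and a diagram chase
carries exactness of `K ⊗ C` and `G ⊗ C` over to `I ⊗ C`.
-/

namespace ModuleComplex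

open LinearMap
open scoped TensorProduct

variable {R} (C : ModuleComplex R)

theorem lTensor_d_rTensor_comm {A B : Type u} [AddCommGroup A] [Module R A]
    [AddCommGroup B] [Module R B] (g : A →ₗ[R] B) (n : ℤ) (z : A ⊗[R] C.X n) :
    (C.d n).lTensor B (g.rTensor (C.X n) z) = g.rTensor (C.X (n + 1)) ((C.d n).lTensor A z) := by
  rw [← LinearMap.comp_apply, ← LinearMap.comp_apply, lTensor_comp_rTensor, rTensor_comp_lTensor]

theorem lTensor_d_lTensor_d (A : Type u) [AddCommGroup A] [Module R A] (n : ℤ)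
    (w : A ⊗[R] C.X n) : (C.d (n + 1)).lTensor A ((C.d n).lTensor A w) = 0 := by
  rw [← LinearMap.comp_apply, ← lTensor_comp, C.comp_eq_zero, lTensor_zero, LinearMap.zero_apply]

theorem Exact.tensorExact_of_flat {C : ModuleComplex R} (hC : C.Exact)
    (A : Type u) [AddCommGroup A] [Module R A] [Module.Flat R A] : C.TensorExact A := fun n =>
  (exact_iff.mp (Module.Flat.lTensor_exact A (exact_iff.mpr (hC n).symm))).symm

theorem tensorExact_of_surjective (hflat : ∀ n, Module.Flat R (C.X n))
    {G I : Type u} [AddCommGroup G] [Module R G] [AddCommGroup I] [Module R I]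
    {f : G →ₗ[R] I} (hf : Function.Surjective f)
    (hK : C.TensorExact (ker f)) (hG : C.TensorExact G) : C.TensorExact I := by
  intro n
  refine le_antisymm ?_ fun x hx => ?_
  · rintro _ ⟨x, rfl⟩
    exact C.lTensor_d_lTensor_d I n x
  rw [mem_ker] at hx
  obtain ⟨y, rfl⟩ := rTensor_surjective (C.X (n + 1)) hf x
  have hdy : f.rTensor _ ((C.d (n + 1)).lTensor G y) = 0 := by
    rw [← lTensor_d_rTensor_comm, hx]
  obtain ⟨z, hz⟩ :=
    (rTensor_exact (C.X (n + 1 + 1)) f.exact_subtype_ker_map hf _).mp hdy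
  -- `z` is a cycle of `ker f ⊗ C` because `ker f ⊗ C → G ⊗ C` is injective in the next degree.
  have hdz : (C.d (n + 1 + 1)).lTensor (ker f) z = 0 := by
    apply Module.Flat.rTensor_preserves_injective_linearMap _ (ker f).injective_subtype
    rw [map_zero, ← lTensor_d_rTensor_comm, hz]
    exact C.lTensor_d_lTensor_d G (n + 1) y
  obtain ⟨w, hw⟩ : z ∈ range ((C.d (n + 1)).lTensor (ker f)) := (hK (n + 1)).ge hdz
  have hcycle : y - (ker f).subtype.rTensor _ w ∈ ker ((C.d (n + 1)).lTensor G) := by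
    rw [mem_ker, map_sub, lTensor_d_rTensor_comm, hw, hz, sub_self]
  obtain ⟨v, hv⟩ := (hG n).ge hcycle
  have hfw : f.rTensor _ ((ker f).subtype.rTensor _ w) = 0 := by
    rw [← LinearMap.comp_apply, ← rTensor_comp, f.comp_ker_subtype, rTensor_zero, LinearMap.zero_apply]
  exact ⟨f.rTensor _ v, by rw [lTensor_d_rTensor_comm, hv, map_sub, hfw, sub_zero]⟩

theorem tensorExact_of_resDimLE_flat (hflat : ∀ n, Module.Flat R (C.X n)) (hC : C.Exact)
    (m : ℕ) (I : Type u) [AddCommGroup I] [Module R I]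
    (hI : ResDimLE R (fun N _ _ => Module.Flat R N) m I) : C.TensorExact I := by
  induction m generalizing I with
  | zero =>
    have : Module.Flat R I := hI
    exact hC.tensorExact_of_flat I
  | succ m ih =>
    obtain ⟨G, _, _, f, hG, hf, hK⟩ := hI
    have : Module.Flat R G := hG
    exact C.tensorExact_of_surjective hflat hf (ih _ hK) (hC.tensorExact_of_flat G)

end ModuleComplex

theorem exists_resDimLE_of_flatDim_ne_top {M : Type u} [AddCommGroup M] [Module R M]
    (h : flatDim R M ≠ ⊤) : ∃ m : ℕ, ResDimLE R (fun N _ _ => Module.Flat R N) m M := by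
  contrapose! h
  rw [flatDim, sInf_eq_top]
  rintro _ ⟨m, rfl, hm⟩
  exact absurd hm (h m)

/-- If every injective module has finite flat dimension, then every complete projective
resolution is a complete flat resolution: it stays exact after tensoring with injectives. -/
theorem stmt7 (R : Type u) [CommRing R]
    (h : ∀ (I : Type u) [AddCommGroup I] [Module R I], Module.Injective R I → flatDim R I ≠ ⊤) :
    ∀ C : ModuleComplex R, IsCompleteProjectiveResolution R C →
      ∀ (I : Type u) [AddCommGroup I] [Module R I], Module.Injective R I →
        C.TensorExact I := by
  rintro C ⟨hproj, hC, -⟩ I _ _ hI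
  have hflat (n : ℤ) : Module.Flat R (C.X n) := have := hproj n; inferInstance
  obtain ⟨m, hm⟩ := exists_resDimLE_of_flatDim_ne_top R (h I hI)
  exact C.tensorExact_of_resDimLE_flat hflat hC m I hm
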